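/- arXiv:2304.02055 — 7 statements merged into one kernel-verified Lean document; each statement's English description precedes it below -/
import Mathlib

section
/- Let n, m, p be positive integers, and let A, U be real n×n matrices, B a real n×m matrix, and C_p a real p×n matrix. Let X be a real symmetric positive definite n×n matrix and let γ₁ > 0, γ₂ ≥ 0 be real scalars. If the 4×4 block matrix L₈(X,γ₁,γ₂) := [[−I, 0, C_p X, 0], [0, −γ₁ I, I, 0], [X C_pᵀ, I, X Aᵀ + A X − X Uᵀ − U X, B], [0, 0, Bᵀ, −γ₂ I]] is negative semidefinite, then the 3×3 block matrix L₁₃(X,γ₁,γ₂) := [[−I, C_p X, 0], [X C_pᵀ, X Aᵀ + A X − γ₁ X Uᵀ U X, B], [0, Bᵀ, −γ₂ I]] is negative semidefinite. (This is the precise matrix content of the claim that the SDP with constraint L₈ ⪯ 0 is a relaxation of the SDP with the exact bilinear constraint.) -/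
/-!
Substituting `x₂ = ((2/γ₁) I - U X) x₃` in the quadratic form of `L₈` turns it into the quadratic
form of `L₁₃`: Young's cross terms `-X Uᵀ - U X` and the `-γ₁ I` block recombine into
`-γ₁ X Uᵀ U X` by completing the square. So `L₁₃ = Eᵀ L₈ E` for an explicit (non-square) `E`,
and congruence preserves negative semidefiniteness.
-/

open Matrix

variable {ι κ μ : Type*}

theorem young_completion [Fintype κ] [DecidableEq κ] {γ : ℝ} (hγ : γ ≠ 0) (V : Matrix κ κ ℝ) :
    γ • (((2 / γ) • 1 - V)ᵀ * ((2 / γ) • 1 - V)) - ((2 / γ) • 1 - V)ᵀ - ((2 / γ) • 1 - V)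
      + Vᵀ + V = γ • (Vᵀ * V) := by
  simp only [transpose_sub, transpose_smul, transpose_one, sub_mul, mul_sub, Matrix.smul_mul,
    Matrix.mul_smul, Matrix.one_mul, Matrix.mul_one, smul_sub, smul_smul]
  match_scalars <;> field_simp <;> ring

/- `L₈` and `L₁₃` of the paper are `relaxedLMI` and `bilinearLMI` at `P = C_p X`,
`M = X Aᵀ + A X` and `V = U X`. -/
def relaxedLMI [DecidableEq ι] [DecidableEq κ] [DecidableEq μ]
    (P : Matrix ι κ ℝ) (M V : Matrix κ κ ℝ) (B : Matrix κ μ ℝ) (γ₁ γ₂ : ℝ) :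
    Matrix ((ι ⊕ κ) ⊕ (κ ⊕ μ)) ((ι ⊕ κ) ⊕ (κ ⊕ μ)) ℝ :=
  fromBlocks (fromBlocks (-1) 0 0 (-(γ₁ • 1))) (fromBlocks P 0 1 0)
    (fromBlocks Pᵀ 1 0 0) (fromBlocks (M - Vᵀ - V) B Bᵀ (-(γ₂ • 1)))

def bilinearLMI [Fintype κ] [DecidableEq ι] [DecidableEq μ]
    (P : Matrix ι κ ℝ) (M V : Matrix κ κ ℝ) (B : Matrix κ μ ℝ) (γ₁ γ₂ : ℝ) :
    Matrix ((ι ⊕ κ) ⊕ μ) ((ι ⊕ κ) ⊕ μ) ℝ :=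
  fromBlocks (fromBlocks (-1) P Pᵀ (M - γ₁ • (Vᵀ * V))) (fromRows 0 B) (fromCols 0 Bᵀ)
    (-(γ₂ • 1))

noncomputable def youngLift [DecidableEq ι] [DecidableEq κ] [DecidableEq μ]
    (γ : ℝ) (V : Matrix κ κ ℝ) : Matrix ((ι ⊕ κ) ⊕ (κ ⊕ μ)) ((ι ⊕ κ) ⊕ μ) ℝ :=
  fromBlocks (fromBlocks 1 0 0 ((2 / γ) • 1 - V)) 0 (fromBlocks 0 1 0 0) (fromRows 0 1)

theorem youngLift_transpose_mul_relaxedLMI_mul [Fintype ι] [Fintype κ] [Fintype μ]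
    [DecidableEq ι] [DecidableEq κ] [DecidableEq μ] {γ₁ : ℝ} (hγ₁ : γ₁ ≠ 0) (γ₂ : ℝ)
    (P : Matrix ι κ ℝ) (M V : Matrix κ κ ℝ) (B : Matrix κ μ ℝ) :
    (youngLift (ι := ι) (μ := μ) γ₁ V)ᵀ * relaxedLMI P M V B γ₁ γ₂ *
        youngLift (ι := ι) (μ := μ) γ₁ V =
      bilinearLMI P M V B γ₁ γ₂ := by
  simp only [youngLift, relaxedLMI, bilinearLMI, fromBlocks_transpose, transpose_fromRows,
    transpose_one, transpose_zero, fromBlocks_multiply, fromBlocks_mul_fromRows,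
    fromCols_mul_fromBlocks, fromCols_mul_fromRows, Matrix.mul_one, Matrix.one_mul,
    Matrix.mul_zero, Matrix.zero_mul, add_zero, zero_add, Matrix.mul_neg, neg_zero,
    fromBlocks_add, fromCols_zero]
  congr 2
  rw [← young_completion hγ₁ V]
  simp only [add_mul, Matrix.neg_mul, Matrix.mul_smul, Matrix.smul_mul, Matrix.mul_one,
    Matrix.one_mul]
  abel

theorem posSemidef_neg_bilinearLMI [Fintype ι] [Fintype κ] [Fintype μ]
    [DecidableEq ι] [DecidableEq κ] [DecidableEq μ] {γ₁ : ℝ} (hγ₁ : γ₁ ≠ 0) {γ₂ : ℝ}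
    {P : Matrix ι κ ℝ} {M V : Matrix κ κ ℝ} {B : Matrix κ μ ℝ}
    (h : (-relaxedLMI P M V B γ₁ γ₂).PosSemidef) : (-bilinearLMI P M V B γ₁ γ₂).PosSemidef := by
  rw [← youngLift_transpose_mul_relaxedLMI_mul hγ₁, ← Matrix.neg_mul, ← Matrix.mul_neg,
    ← conjTranspose_eq_transpose_of_trivial]
  exact h.conjTranspose_mul_mul_same _

theorem stmt_0_general {n m p : ℕ}
    (A U : Matrix (Fin n) (Fin n) ℝ) (B : Matrix (Fin n) (Fin m) ℝ)
    (Cp : Matrix (Fin p) (Fin n) ℝ)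
    (X : Matrix (Fin n) (Fin n) ℝ) (hXsym : X.IsSymm)
    (γ₁ γ₂ : ℝ) (hγ₁ : 0 < γ₁)
    (h8 : (-(Matrix.fromBlocks
        (Matrix.fromBlocks (-1) 0 0 (-(γ₁ • (1 : Matrix (Fin n) (Fin n) ℝ))))
        (Matrix.fromBlocks (Cp * X) 0 1 0)
        (Matrix.fromBlocks (X * Cpᵀ) 1 0 0)
        (Matrix.fromBlocks (X * Aᵀ + A * X - X * Uᵀ - U * X) B
          Bᵀ (-(γ₂ • (1 : Matrix (Fin m) (Fin m) ℝ)))))).PosSemidef) :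
    (-(Matrix.fromBlocks
        (Matrix.fromBlocks (-1) (Cp * X) (X * Cpᵀ)
          (X * Aᵀ + A * X - γ₁ • (X * Uᵀ * U * X)))
        (Matrix.fromRows 0 B)
        (Matrix.fromCols 0 Bᵀ)
        (-(γ₂ • (1 : Matrix (Fin m) (Fin m) ℝ))))).PosSemidef := by
  have hP : (Cp * X)ᵀ = X * Cpᵀ := by rw [transpose_mul, hXsym.eq]
  have hV : (U * X)ᵀ = X * Uᵀ := by rw [transpose_mul, hXsym.eq]
  have hL8 : (-relaxedLMI (Cp * X) (X * Aᵀ + A * X) (U * X) B γ₁ γ₂).PosSemidef := by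
    rwa [relaxedLMI, hP, hV]
  have hL13 := posSemidef_neg_bilinearLMI hγ₁.ne' hL8
  rwa [bilinearLMI, hP, hV, ← Matrix.mul_assoc] at hL13

/-- The relaxed LMI `L₈ ⪯ 0` (obtained via the Young relation) implies the exact
bilinear LMI `L₁₃ ⪯ 0`: the SDP with constraint `L₈ ⪯ 0` is a relaxation of the SDP
with the exact bilinear constraint. -/
theorem stmt_0 {n m p : ℕ} (hn : 0 < n) (hm : 0 < m) (hp : 0 < p)
    (A U : Matrix (Fin n) (Fin n) ℝ) (B : Matrix (Fin n) (Fin m) ℝ)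
    (Cp : Matrix (Fin p) (Fin n) ℝ)
    (X : Matrix (Fin n) (Fin n) ℝ) (hXsym : X.IsSymm) (hX : X.PosDef)
    (γ₁ γ₂ : ℝ) (hγ₁ : 0 < γ₁) (hγ₂ : 0 ≤ γ₂)
    (h8 : (-(Matrix.fromBlocks
        (Matrix.fromBlocks (-1) 0 0 (-(γ₁ • (1 : Matrix (Fin n) (Fin n) ℝ))))
        (Matrix.fromBlocks (Cp * X) 0 1 0)
        (Matrix.fromBlocks (X * Cpᵀ) 1 0 0)
        (Matrix.fromBlocks (X * Aᵀ + A * X - X * Uᵀ - U * X) B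
          Bᵀ (-(γ₂ • (1 : Matrix (Fin m) (Fin m) ℝ)))))).PosSemidef) :
    (-(Matrix.fromBlocks
        (Matrix.fromBlocks (-1) (Cp * X) (X * Cpᵀ)
          (X * Aᵀ + A * X - γ₁ • (X * Uᵀ * U * X)))
        (Matrix.fromRows 0 B)
        (Matrix.fromCols 0 Bᵀ)
        (-(γ₂ • (1 : Matrix (Fin m) (Fin m) ℝ))))).PosSemidef :=
  stmt_0_general A U B Cp X hXsym γ₁ γ₂ hγ₁ h8
end

section
/- Let n, m, p be positive integers, and let A, U be real n×n matrices, B a real n×m matrix, and C_p a real p×n matrix. Let X be a real symmetric positive definite n×n matrix and let γ₁ > 0, γ₂ ≥ 0 be real scalars. Suppose the 4×4 block matrix L₈(X,γ₁,γ₂) := [[−I, 0, C_p X, 0], [0, −γ₁ I, I, 0], [X C_pᵀ, I, X Aᵀ + A X − X Uᵀ − U X, B], [0, 0, Bᵀ, −γ₂ I]] is negative semidefinite. Then, setting P := X⁻¹, the 2×2 block matrix L₇(P,γ₁,γ₂) := [[Aᵀ P + P A + C_pᵀ C_p − γ₁ Uᵀ U, P B], [Bᵀ P, −γ₂ I]]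 is negative semidefinite. (That is, every optimal/feasible point of the relaxed SDP yields a feasible point of the original SDP.) -/
open Matrix

/-- Every feasible point `(X, γ₁, γ₂)` of the relaxed SDP (constraint `L₈ ⪯ 0`) yields,
via `P := X⁻¹`, a feasible point of the original SDP (constraint `L₇ ⪯ 0`). -/
theorem stmt_1 {n m p : ℕ} (hn : 0 < n) (hm : 0 < m) (hp : 0 < p)
    (A U : Matrix (Fin n) (Fin n) ℝ) (B : Matrix (Fin n) (Fin m) ℝ)
    (Cp : Matrix (Fin p) (Fin n) ℝ)
    (X : Matrix (Fin n) (Fin n) ℝ) (hXsym : X.IsSymm) (hX : X.PosDef)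
    (γ₁ γ₂ : ℝ) (hγ₁ : 0 < γ₁) (hγ₂ : 0 ≤ γ₂)
    (h8 : (-(Matrix.fromBlocks
        (Matrix.fromBlocks (-1) 0 0 (-(γ₁ • (1 : Matrix (Fin n) (Fin n) ℝ))))
        (Matrix.fromBlocks (Cp * X) 0 1 0)
        (Matrix.fromBlocks (X * Cpᵀ) 1 0 0)
        (Matrix.fromBlocks (X * Aᵀ + A * X - X * Uᵀ - U * X) B
          Bᵀ (-(γ₂ • (1 : Matrix (Fin m) (Fin m) ℝ)))))).PosSemidef) :
    (-(Matrix.fromBlocks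
        (Aᵀ * X⁻¹ + X⁻¹ * A + Cpᵀ * Cp - γ₁ • (Uᵀ * U)) (X⁻¹ * B)
        (Bᵀ * X⁻¹) (-(γ₂ • (1 : Matrix (Fin m) (Fin m) ℝ))))).PosSemidef := by
  have hdet : IsUnit X.det := (hX.det_pos.ne').isUnit
  have hXP : X * X⁻¹ = 1 := X.mul_nonsing_inv hdet
  have hPX : X⁻¹ * X = 1 := X.nonsing_inv_mul hdet
  have hPt : (X⁻¹)ᵀ = X⁻¹ := by
    rw [transpose_nonsing_inv, hXsym.eq]
  set s := Real.sqrt γ₁ with hs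
  have hs2 : s * s = γ₁ := Real.mul_self_sqrt hγ₁.le
  have hsne : s ≠ 0 := by positivity
  set Stop : Matrix (Fin p ⊕ Fin n) (Fin n ⊕ Fin m) ℝ :=
    fromBlocks Cp 0 (γ₁⁻¹ • X⁻¹) 0 with hStop
  set Sbot : Matrix (Fin n ⊕ Fin m) (Fin n ⊕ Fin m) ℝ :=
    fromBlocks X⁻¹ 0 0 1 with hSbot
  set S : Matrix ((Fin p ⊕ Fin n) ⊕ (Fin n ⊕ Fin m)) (Fin n ⊕ Fin m) ℝ :=
    fromRows Stop Sbot with hS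
  set W : Matrix (Fin n ⊕ Fin m) (Fin n ⊕ Fin m) ℝ :=
    fromBlocks (s • U - s⁻¹ • X⁻¹) 0 0 0 with hW
  have key : (-(Matrix.fromBlocks
        (Aᵀ * X⁻¹ + X⁻¹ * A + Cpᵀ * Cp - γ₁ • (Uᵀ * U)) (X⁻¹ * B)
        (Bᵀ * X⁻¹) (-(γ₂ • (1 : Matrix (Fin m) (Fin m) ℝ)))))
      = Sᵀ * (-(Matrix.fromBlocks
        (Matrix.fromBlocks (-1) 0 0 (-(γ₁ • (1 : Matrix (Fin n) (Fin n) ℝ))))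
        (Matrix.fromBlocks (Cp * X) 0 1 0)
        (Matrix.fromBlocks (X * Cpᵀ) 1 0 0)
        (Matrix.fromBlocks (X * Aᵀ + A * X - X * Uᵀ - U * X) B
          Bᵀ (-(γ₂ • (1 : Matrix (Fin m) (Fin m) ℝ)))))) * S + Wᵀ * W := by
    simp only [hS, hStop, hSbot, hW, transpose_fromRows, fromBlocks_neg,
      fromBlocks_transpose, transpose_zero, transpose_one, transpose_smul, hPt,
      fromCols_mul_fromBlocks, fromBlocks_mul_fromRows,
      fromCols_mul_fromRows, fromBlocks_multiply, fromBlocks_add, neg_neg,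
      transpose_neg, transpose_sub, transpose_mul, transpose_transpose,
      Matrix.mul_smul, Matrix.smul_mul, Matrix.mul_one, Matrix.one_mul,
      Matrix.mul_zero, Matrix.zero_mul, Matrix.mul_neg, Matrix.neg_mul,
      smul_smul, add_zero, zero_add, neg_zero, smul_neg, smul_zero, smul_add, smul_sub]
    have hss1 : s * s⁻¹ = 1 := mul_inv_cancel₀ hsne
    have hss2 : s⁻¹ * s = 1 := inv_mul_cancel₀ hsne
    have hss3 : s⁻¹ * s⁻¹ = γ₁⁻¹ := by
      rw [← mul_inv]; rw [hs2]
    have hg : γ₁ * γ₁⁻¹ = 1 := mul_inv_cancel₀ hγ₁.ne'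
    simp only [Matrix.mul_assoc, Matrix.nonsing_inv_mul_cancel_left _ _ hdet,
      Matrix.sub_mul, Matrix.mul_sub, Matrix.add_mul, Matrix.mul_add,
      Matrix.smul_mul, Matrix.mul_smul, smul_smul, hss1, hss2, hss3, hs2, hg, hXP, hPX,
      one_smul, Matrix.mul_one, Matrix.one_mul, neg_sub, neg_add, neg_neg,
      smul_sub, smul_add, smul_neg]
    simp only [Matrix.neg_mul, Matrix.mul_neg, Matrix.smul_mul, Matrix.mul_smul,
      Matrix.mul_assoc, hXP, hPX, Matrix.mul_one, smul_smul, smul_neg, neg_neg]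
    abel
  rw [key]
  have h1 : (Sᵀ * (-(Matrix.fromBlocks
        (Matrix.fromBlocks (-1) 0 0 (-(γ₁ • (1 : Matrix (Fin n) (Fin n) ℝ))))
        (Matrix.fromBlocks (Cp * X) 0 1 0)
        (Matrix.fromBlocks (X * Cpᵀ) 1 0 0)
        (Matrix.fromBlocks (X * Aᵀ + A * X - X * Uᵀ - U * X) B
          Bᵀ (-(γ₂ • (1 : Matrix (Fin m) (Fin m) ℝ)))))) * S).PosSemidef := by
    have := h8.conjTranspose_mul_mul_same S
    simpa using this
  have h2 : (Wᵀ * W).PosSemidef := by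
    have := posSemidef_conjTranspose_mul_self W
    simpa using this
  exact h1.add h2
end

section
/- Let n, m, p be positive integers, A, U real n×n matrices, B a real n×m matrix, C_p a real p×n matrix, and let ε_r ≥ 0, ε_a ≥ 0 be real thresholds. Define S₇ := { ε_r·γ₁ + ε_a·γ₂ : there exist a real symmetric positive definite n×n matrix P and scalars γ₁ ≥ 0, γ₂ ≥ 0 such that the block matrix [[Aᵀ P + P A + C_pᵀ C_p − γ₁ Uᵀ U, P B], [Bᵀ P, −γ₂ I]] is negative semidefinite } and S₈ := { ε_r·γ₁ + ε_a·γ₂ : there exist a real symmetric positive definite n×n matrix X and scalars γ₁ > 0, γ₂ ≥ 0 such that the block matrix [[−I, 0, C_p X, 0], [0, −γ₁ I, I, 0], [X C_pᵀ, I, X Aᵀ + A X − X Uᵀ − U X, B], [0, 0, Bᵀ, −γ₂ I]] is negative semidefinite }. If S₈ is nonempty, then sInf S₇ ≤ sInf S₈; that is, the optimal value of the relaxed SDP is greater than or equal to the optimal value of the original SDP. -/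
open Matrix

private lemma fromColumns_add' {m n₁ n₂ : Type*} (A C : Matrix m n₁ ℝ) (B D : Matrix m n₂ ℝ) :
    fromCols A B + fromCols C D = fromCols (A + C) (B + D) := by
  ext i (j | j) <;> simp [fromCols_apply_inl, fromCols_apply_inr]

private lemma fromRows_add' {m₁ m₂ n : Type*} (A C : Matrix m₁ n ℝ) (B D : Matrix m₂ n ℝ) :
    fromRows A B + fromRows C D = fromRows (A + C) (B + D) := by
  ext (i | i) j <;> simp [fromRows_apply_inl, fromRows_apply_inr]

/-- The optimal value of the relaxed SDP (feasible objective values `S₈`) is greater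
than or equal to the optimal value of the original SDP (feasible objective values `S₇`). -/
theorem stmt_2 {n m p : ℕ} (hn : 0 < n) (hm : 0 < m) (hp : 0 < p)
    (A U : Matrix (Fin n) (Fin n) ℝ) (B : Matrix (Fin n) (Fin m) ℝ)
    (Cp : Matrix (Fin p) (Fin n) ℝ)
    (εr εa : ℝ) (hεr : 0 ≤ εr) (hεa : 0 ≤ εa)
    (S₇ : Set ℝ) (hS₇ : S₇ = {v : ℝ | ∃ (P : Matrix (Fin n) (Fin n) ℝ) (γ₁ γ₂ : ℝ),
      P.IsSymm ∧ P.PosDef ∧ 0 ≤ γ₁ ∧ 0 ≤ γ₂ ∧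
      (-(Matrix.fromBlocks
          (Aᵀ * P + P * A + Cpᵀ * Cp - γ₁ • (Uᵀ * U)) (P * B)
          (Bᵀ * P) (-(γ₂ • (1 : Matrix (Fin m) (Fin m) ℝ))))).PosSemidef ∧
      v = εr * γ₁ + εa * γ₂})
    (S₈ : Set ℝ) (hS₈ : S₈ = {v : ℝ | ∃ (X : Matrix (Fin n) (Fin n) ℝ) (γ₁ γ₂ : ℝ),
      X.IsSymm ∧ X.PosDef ∧ 0 < γ₁ ∧ 0 ≤ γ₂ ∧
      (-(Matrix.fromBlocks
          (Matrix.fromBlocks (-1) 0 0 (-(γ₁ • (1 : Matrix (Fin n) (Fin n) ℝ))))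
          (Matrix.fromBlocks (Cp * X) 0 1 0)
          (Matrix.fromBlocks (X * Cpᵀ) 1 0 0)
          (Matrix.fromBlocks (X * Aᵀ + A * X - X * Uᵀ - U * X) B
            Bᵀ (-(γ₂ • (1 : Matrix (Fin m) (Fin m) ℝ)))))).PosSemidef ∧
      v = εr * γ₁ + εa * γ₂})
    (hne : S₈.Nonempty) :
    sInf S₇ ≤ sInf S₈ := by
  classical
  have hsub : S₈ ⊆ S₇ := by
    rw [hS₇, hS₈]
    rintro v ⟨X, γ₁, γ₂, hXs, hXpd, hγ₁, hγ₂, hM, rfl⟩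
    set P : Matrix (Fin n) (Fin n) ℝ := X⁻¹ with hPdef
    have hPpd : P.PosDef := hXpd.inv
    have hPs : P.IsSymm := by
      rw [Matrix.IsSymm, hPdef, Matrix.transpose_nonsing_inv, hXs.eq]
    have hdet : IsUnit X.det := hXpd.det_pos.ne'.isUnit
    have hXP : X * P = 1 := Matrix.mul_nonsing_inv X hdet
    have hPX : P * X = 1 := Matrix.nonsing_inv_mul X hdet
    have hPX' : ∀ {k : Type} [Fintype k] (M : Matrix (Fin n) k ℝ), P * (X * M) = M := by
      intro k _ M; rw [← Matrix.mul_assoc, hPX, Matrix.one_mul]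
    have hXP' : ∀ {k : Type} [Fintype k] (M : Matrix (Fin n) k ℝ), X * (P * M) = M := by
      intro k _ M; rw [← Matrix.mul_assoc, hXP, Matrix.one_mul]
    set a : ℝ := Real.sqrt γ₁ with hadef
    have ha : 0 < a := Real.sqrt_pos.mpr hγ₁
    have ha2 : a * a = γ₁ := Real.mul_self_sqrt hγ₁.le
    have hai : a * a⁻¹ = 1 := mul_inv_cancel₀ ha.ne'
    have hia : a⁻¹ * a = 1 := inv_mul_cancel₀ ha.ne'
    have hii : a⁻¹ * a⁻¹ = γ₁⁻¹ := by rw [← mul_inv, ha2]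
    set W : Matrix (Fin n) (Fin n) ℝ := a • U - a⁻¹ • P with hWdef
    set c₁ : Matrix ((Fin p ⊕ Fin n) ⊕ (Fin n ⊕ Fin m)) (Fin n) ℝ :=
      fromRows (fromRows Cp (γ₁⁻¹ • P)) (fromRows P (0 : Matrix (Fin m) (Fin n) ℝ)) with hc₁
    set c₂ : Matrix ((Fin p ⊕ Fin n) ⊕ (Fin n ⊕ Fin m)) (Fin m) ℝ :=
      fromRows (0 : Matrix (Fin p ⊕ Fin n) (Fin m) ℝ)
        (fromRows (0 : Matrix (Fin n) (Fin m) ℝ) (1 : Matrix (Fin m) (Fin m) ℝ)) with hc₂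
    set L := fromCols c₁ c₂ with hL
    set K := fromCols W (0 : Matrix (Fin n) (Fin m) ℝ) with hK
    have key : (-(Matrix.fromBlocks
          (Aᵀ * P + P * A + Cpᵀ * Cp - γ₁ • (Uᵀ * U)) (P * B)
          (Bᵀ * P) (-(γ₂ • (1 : Matrix (Fin m) (Fin m) ℝ)))))
        = Lᵀ * (-(Matrix.fromBlocks
          (Matrix.fromBlocks (-1) 0 0 (-(γ₁ • (1 : Matrix (Fin n) (Fin n) ℝ))))
          (Matrix.fromBlocks (Cp * X) 0 1 0)
          (Matrix.fromBlocks (X * Cpᵀ) 1 0 0)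
          (Matrix.fromBlocks (X * Aᵀ + A * X - X * Uᵀ - U * X) B
            Bᵀ (-(γ₂ • (1 : Matrix (Fin m) (Fin m) ℝ)))))) * L + Kᵀ * K := by
      rw [hL, hK, hc₁, hc₂, hWdef]
      simp only [Matrix.fromBlocks_neg, Matrix.transpose_fromCols, Matrix.transpose_fromRows,
        Matrix.fromRows_mul, Matrix.mul_fromCols, Matrix.fromCols_mul_fromBlocks,
        Matrix.fromCols_mul_fromRows, Matrix.fromRows_mul_fromCols,
        Matrix.fromBlocks_mul_fromRows, fromColumns_add', fromRows_add',
        Matrix.fromCols_fromRows_eq_fromBlocks, Matrix.fromBlocks_add,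
        Matrix.transpose_smul, Matrix.transpose_neg, Matrix.transpose_one, Matrix.transpose_zero,
        Matrix.transpose_sub, Matrix.transpose_add, Matrix.transpose_mul,
        Matrix.transpose_transpose, Matrix.fromBlocks_transpose, Matrix.fromBlocks_multiply,
        Matrix.mul_zero, Matrix.zero_mul, Matrix.mul_one, Matrix.one_mul, Matrix.mul_neg,
        Matrix.neg_mul, add_zero, zero_add, neg_neg, neg_zero,
        hPs.eq, hXs.eq]
      rw [show (0 : Matrix (Fin n ⊕ Fin m) (Fin m) ℝ)
            = fromRows (0 : Matrix (Fin n) (Fin m) ℝ) (0 : Matrix (Fin m) (Fin m) ℝ) by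
          ext (i | i) j <;> simp [Matrix.fromRows_apply_inl, Matrix.fromRows_apply_inr],
        Matrix.fromCols_fromRows_eq_fromBlocks, Matrix.fromBlocks_add]
      rw [Matrix.fromBlocks_inj]
      refine ⟨?_, by simp, by simp, by simp⟩
      simp only [Matrix.mul_add, Matrix.add_mul, Matrix.mul_sub, Matrix.sub_mul,
        Matrix.neg_mul, Matrix.mul_neg, Matrix.smul_mul, Matrix.mul_smul, smul_smul,
        Matrix.mul_assoc, hPX', hXP', hXP, hPX, Matrix.mul_one, Matrix.one_mul,
        hai, hia, hii, ha2, one_smul, neg_sub, smul_sub, smul_add,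
        mul_inv_cancel₀ hγ₁.ne', mul_one, smul_neg]
      abel
    refine ⟨P, γ₁, γ₂, hPs, hPpd, hγ₁.le, hγ₂, ?_, rfl⟩
    rw [key]
    have h1 := hM.conjTranspose_mul_mul_same L
    rw [Matrix.conjTranspose_eq_transpose_of_trivial] at h1
    have h2 := Matrix.posSemidef_conjTranspose_mul_self K
    rw [Matrix.conjTranspose_eq_transpose_of_trivial] at h2
    exact h1.add h2
  refine csInf_le_csInf ?_ hne hsub
  refine ⟨0, ?_⟩
  rw [hS₇]
  rintro v ⟨P, γ₁, γ₂, -, -, h1, h2, -, rfl⟩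
  positivity
end

section
/- Let H, E, F be real Hilbert spaces and let G_p : H → E and G_r : H → F be continuous linear maps. For real thresholds ε_r, ε_a define the attack impact q(ε_r, ε_a) := sSup { ‖G_p a‖² : a ∈ H, ‖G_r a‖² ≤ ε_r and ‖a‖² ≤ ε_a }. Fix ε_r > 0 and assume that the set { ‖G_p a‖² : a ∈ H, ‖G_r a‖² ≤ 1 } is bounded above, with supremum γ_r := sSup { ‖G_p a‖² : a ∈ H, ‖G_r a‖² ≤ 1 } (the output-to-output gain). Then the function ε_a ↦ q(ε_r, ε_a) tends to γ_r · ε_r as ε_a → ∞ (Filter.Tendsto along Filter.atTop to the neighborhood of γ_r · ε_r). In other words, when the attack-energy constraint is removed, the impact converges to the output-to-output gain times the detection threshold. -/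
/-- Scaling of the squared norm under a continuous linear map. -/
lemma norm_map_smul_sq {H E : Type*} [NormedAddCommGroup H] [NormedSpace ℝ H]
    [NormedAddCommGroup E] [NormedSpace ℝ E] (G : H →L[ℝ] E) (c : ℝ) (a : H) :
    ‖G (c • a)‖ ^ 2 = c ^ 2 * ‖G a‖ ^ 2 := by
  rw [map_smul, norm_smul, mul_pow, Real.norm_eq_abs, sq_abs]

/-- As the attack-energy budget `ε_a → ∞`, the stealthy attack impact converges to the
output-to-output gain times the detection threshold: `q(ε_r, ε_a) → γ_r ε_r`. -/
theorem stmt_4 {H E F : Type*}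
    [NormedAddCommGroup H] [InnerProductSpace ℝ H] [CompleteSpace H]
    [NormedAddCommGroup E] [InnerProductSpace ℝ E] [CompleteSpace E]
    [NormedAddCommGroup F] [InnerProductSpace ℝ F] [CompleteSpace F]
    (Gp : H →L[ℝ] E) (Gr : H →L[ℝ] F)
    (q : ℝ → ℝ → ℝ)
    (hq : ∀ εr εa, q εr εa =
      sSup {y : ℝ | ∃ a : H, ‖Gr a‖ ^ 2 ≤ εr ∧ ‖a‖ ^ 2 ≤ εa ∧ y = ‖Gp a‖ ^ 2})
    (εr : ℝ) (hεr : 0 < εr)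
    (hbdd : BddAbove {y : ℝ | ∃ a : H, ‖Gr a‖ ^ 2 ≤ 1 ∧ y = ‖Gp a‖ ^ 2})
    (γr : ℝ) (hγr : γr = sSup {y : ℝ | ∃ a : H, ‖Gr a‖ ^ 2 ≤ 1 ∧ y = ‖Gp a‖ ^ 2}) :
    Filter.Tendsto (fun εa => q εr εa) Filter.atTop (nhds (γr * εr)) := by
  set T : Set ℝ := {y : ℝ | ∃ a : H, ‖Gr a‖ ^ 2 ≤ 1 ∧ y = ‖Gp a‖ ^ 2} with hTdef
  have hT0 : (0 : ℝ) ∈ T := ⟨0, by simp⟩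
  have hTne : T.Nonempty := ⟨0, hT0⟩
  have hs : (0 : ℝ) < Real.sqrt εr := Real.sqrt_pos.2 hεr
  have hsq : Real.sqrt εr ^ 2 = εr := Real.sq_sqrt hεr.le
  -- every element of the εr-constrained set is ≤ γr * εr
  have hub : ∀ y : ℝ, (∃ a : H, ‖Gr a‖ ^ 2 ≤ εr ∧ y = ‖Gp a‖ ^ 2) → y ≤ γr * εr := by
    rintro y ⟨a, h1, rfl⟩
    set b := (Real.sqrt εr)⁻¹ • a with hb
    have hGrb : ‖Gr b‖ ^ 2 ≤ 1 := by
      rw [hb, norm_map_smul_sq, inv_pow, hsq]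
      rw [inv_mul_le_iff₀ hεr]; linarith
    have hmem : ‖Gp b‖ ^ 2 ∈ T := ⟨b, hGrb, rfl⟩
    have hle : ‖Gp b‖ ^ 2 ≤ γr := hγr ▸ le_csSup hbdd hmem
    have hab : a = Real.sqrt εr • b := by
      rw [hb, smul_smul, mul_inv_cancel₀ hs.ne', one_smul]
    calc ‖Gp a‖ ^ 2 = εr * ‖Gp b‖ ^ 2 := by rw [hab, norm_map_smul_sq, hsq]
      _ ≤ εr * γr := by nlinarith
      _ = γr * εr := mul_comm _ _
  rw [Metric.tendsto_atTop]
  intro ε hε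
  -- pick a near-optimal b
  have hlt : γr - ε / εr < sSup T := by
    rw [← hγr]; linarith [div_pos hε hεr]
  obtain ⟨y, ⟨b, hGrb, rfl⟩, hy⟩ := exists_lt_of_lt_csSup hTne hlt
  refine ⟨max 0 (‖Real.sqrt εr • b‖ ^ 2), fun εa hεa => ?_⟩
  set S : Set ℝ := {y : ℝ | ∃ a : H, ‖Gr a‖ ^ 2 ≤ εr ∧ ‖a‖ ^ 2 ≤ εa ∧ y = ‖Gp a‖ ^ 2}
    with hSdef
  have hSb : BddAbove S := ⟨γr * εr, fun z ⟨a, h1, _, h3⟩ => hub z ⟨a, h1, h3⟩⟩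
  have hmemS : εr * ‖Gp b‖ ^ 2 ∈ S := by
    refine ⟨Real.sqrt εr • b, ?_, le_trans (le_max_right _ _) hεa, ?_⟩
    · rw [norm_map_smul_sq, hsq]; nlinarith [sq_nonneg ‖Gr b‖]
    · rw [norm_map_smul_sq, hsq]
  have hqle : q εr εa ≤ γr * εr := by
    rw [hq]
    exact csSup_le ⟨_, hmemS⟩ (fun z ⟨a, h1, _, h3⟩ => hub z ⟨a, h1, h3⟩)
  have hqge : γr * εr - ε < q εr εa := by
    have h1 : εr * ‖Gp b‖ ^ 2 ≤ q εr εa := by rw [hq]; exact le_csSup hSb hmemS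
    have h2 : γr * εr - ε < εr * ‖Gp b‖ ^ 2 := by
      have h := mul_lt_mul_of_pos_right hy hεr
      rw [sub_mul, div_mul_cancel₀ _ hεr.ne'] at h
      linarith [mul_comm (‖Gp b‖ ^ 2) εr]
    linarith
  rw [Real.dist_eq, abs_lt]
  constructor <;> linarith
end

section
/- Let n, m, p be positive integers, A, U real n×n matrices, B a real n×m matrix, and C_p a real p×n matrix. Let P be a real symmetric positive definite n×n matrix, set X := P⁻¹, and let γ₁ ≥ 0, γ₂ ≥ 0 be real scalars. Then the 2×2 block matrix [[Aᵀ P + P A + C_pᵀ C_p − γ₁ Uᵀ U, P B], [Bᵀ P, −γ₂ I]] is negative semidefinite if and only if the 3×3 block matrix [[−I, C_p X, 0], [X C_pᵀ, X Aᵀ + A X − γ₁ X Uᵀ U X, B], [0, Bᵀ, −γ₂ I]] is negative semidefinite. (This is the exact Schur-complement-plus-congruence reformulation of the impact LMI performed in the proof of the convex relaxation theorem.) -/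
/-!
Congruence by `diag(X, I)` with `X = P⁻¹` (symmetric, since `P` is) turns the 2×2 LMI into
`[[X K X, B], [Bᵀ, -γ₂ I]]`, where `K` is its upper-left block. Expanding `X K X` yields
`X Aᵀ + A X - γ₁ X Uᵀ U X + (Cp X)ᵀ (Cp X)`, and the last term is exactly what a Schur
complement with respect to the `-I` block of the 3×3 LMI contributes.
-/

open Matrix

section Blocks

variable {l m n α : Type*}

theorem fromBlocks_fromBlocks_submatrix_sumAssoc [Zero α]
    (A : Matrix l l α) (B : Matrix l m α) (C : Matrix m l α) (D : Matrix m m α)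
    (E : Matrix m n α) (F : Matrix n m α) (G : Matrix n n α) :
    (fromBlocks (fromBlocks A B C D) (fromRows 0 E) (fromCols 0 F) G).submatrix
        (Equiv.sumAssoc l m n).symm (Equiv.sumAssoc l m n).symm =
      fromBlocks A (fromCols B 0) (fromRows C 0) (fromBlocks D E F G) := by
  ext (i | i | i) (j | j | j) <;> rfl

theorem fromBlocks_diag_mul_fromBlocks_mul_fromBlocks_diag [Fintype m] [DecidableEq m]
    [Fintype n] [DecidableEq n] [Semiring α] {Y X P : Matrix m m α}
    (hYP : Y * P = 1) (hPX : P * X = 1)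
    (K : Matrix m m α) (B : Matrix m n α) (C : Matrix n m α) (G : Matrix n n α) :
    fromBlocks Y 0 0 1 * fromBlocks K (P * B) (C * P) G * fromBlocks X 0 0 1 =
      fromBlocks (Y * K * X) B C G := by
  simp [fromBlocks_multiply, ← Matrix.mul_assoc Y, hYP, Matrix.mul_assoc C, hPX]

end Blocks

section Schur

variable {l m n R : Type*} [CommRing R] [PartialOrder R] [StarRing R] [StarOrderedRing R]
  [NoZeroDivisors R] [Fintype l] [DecidableEq l] [Fintype m] [Fintype n]

theorem posSemidef_neg_fromBlocks_neg_one_iff (C : Matrix l m R) (D : Matrix m m R) :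
    (-fromBlocks (-1) C Cᴴ D).PosSemidef ↔ (-(D + Cᴴ * C)).PosSemidef := by
  have h : -fromBlocks (-1) C Cᴴ D = fromBlocks 1 (-C) (-C)ᴴ (-D) := by
    simp [fromBlocks_neg]
  let _ : Invertible (1 : Matrix l l R) := invertibleOne
  rw [h, PosDef.fromBlocks₁₁ _ _ PosDef.one, inv_one, Matrix.mul_one, conjTranspose_neg,
    Matrix.neg_mul, Matrix.mul_neg, neg_neg, neg_add']

theorem posSemidef_neg_fromBlocks_fromBlocks_neg_one_iff (C : Matrix l m R) (S : Matrix m m R)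
    (B : Matrix m n R) (G : Matrix n n R) :
    (-fromBlocks (fromBlocks (-1) C Cᴴ S) (fromRows 0 B) (fromCols 0 Bᴴ) G).PosSemidef ↔
      (-fromBlocks (S + Cᴴ * C) B Bᴴ G).PosSemidef := by
  rw [← posSemidef_submatrix_equiv (Equiv.sumAssoc l m n).symm, submatrix_neg,
    Pi.neg_apply, Pi.neg_apply, fromBlocks_fromBlocks_submatrix_sumAssoc]
  have hC : (fromCols C (0 : Matrix l n R))ᴴ = fromRows Cᴴ 0 := by
    simp [conjTranspose_fromCols_eq_fromRows_conjTranspose]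
  rw [← hC, posSemidef_neg_fromBlocks_neg_one_iff, hC, fromRows_mul_fromCols]
  simp [fromBlocks_add]

end Schur

theorem stmt_11_general {n m p : ℕ}
    (A U : Matrix (Fin n) (Fin n) ℝ) (B : Matrix (Fin n) (Fin m) ℝ)
    (Cp : Matrix (Fin p) (Fin n) ℝ)
    (P : Matrix (Fin n) (Fin n) ℝ) (hP : P.PosDef)
    (X : Matrix (Fin n) (Fin n) ℝ) (hX : X = P⁻¹)
    (γ₁ γ₂ : ℝ) :
    (-(Matrix.fromBlocks
        (Aᵀ * P + P * A + Cpᵀ * Cp - γ₁ • (Uᵀ * U)) (P * B)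
        (Bᵀ * P) (-(γ₂ • (1 : Matrix (Fin m) (Fin m) ℝ))))).PosSemidef ↔
    (-(Matrix.fromBlocks
        (Matrix.fromBlocks (-1) (Cp * X) (X * Cpᵀ)
          (X * Aᵀ + A * X - γ₁ • (X * Uᵀ * U * X)))
        (Matrix.fromRows 0 B)
        (Matrix.fromCols 0 Bᵀ)
        (-(γ₂ • (1 : Matrix (Fin m) (Fin m) ℝ))))).PosSemidef := by
  have hdet : IsUnit P.det := (isUnit_iff_isUnit_det P).mp hP.isUnit
  have hXP : X * P = 1 := hX ▸ nonsing_inv_mul P hdet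
  have hPX : P * X = 1 := hX ▸ mul_nonsing_inv P hdet
  have hXsymm : Xᴴ = X := by rw [hX, conjTranspose_nonsing_inv, hP.isHermitian.eq]
  set T := fromBlocks X 0 0 (1 : Matrix (Fin m) (Fin m) ℝ)
  have hT : IsUnit T := (isUnit_iff_isUnit_det T).mpr <|
    isUnit_det_of_right_inverse (B := fromBlocks P 0 0 1) (by simp [T, fromBlocks_multiply, hXP])
  have hTstar : star T = T := by
    rw [star_eq_conjTranspose, fromBlocks_conjTranspose, hXsymm]
    simp [T]
  have hXKX : X * (Aᵀ * P + P * A + Cpᵀ * Cp - γ₁ • (Uᵀ * U)) * X =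
      X * Aᵀ + A * X - γ₁ • (X * Uᵀ * U * X) + (Cp * X)ᴴ * (Cp * X) := by
    have hPA : X * (P * A) * X = A * X := by rw [← Matrix.mul_assoc, hXP, Matrix.one_mul]
    have hAP : X * (Aᵀ * P) * X = X * Aᵀ := by
      rw [Matrix.mul_assoc, Matrix.mul_assoc, hPX, Matrix.mul_one]
    simp only [Matrix.mul_add, Matrix.add_mul, Matrix.mul_sub, Matrix.sub_mul, Matrix.mul_smul,
      Matrix.smul_mul]
    rw [hPA, hAP, conjTranspose_mul, hXsymm, conjTranspose_eq_transpose_of_trivial]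
    simp only [Matrix.mul_assoc]
    abel
  have hCX : X * Cpᵀ = (Cp * X)ᴴ := by
    rw [conjTranspose_mul, hXsymm, conjTranspose_eq_transpose_of_trivial]
  rw [← hT.posSemidef_star_left_conjugate_iff, hTstar, Matrix.mul_neg, Matrix.neg_mul,
    fromBlocks_diag_mul_fromBlocks_mul_fromBlocks_diag hXP hPX, hXKX, hCX,
    ← conjTranspose_eq_transpose_of_trivial B, posSemidef_neg_fromBlocks_fromBlocks_neg_one_iff]

/-- Exact Schur-complement-plus-congruence reformulation of the impact LMI: with
`X := P⁻¹`, the 2×2 block LMI `L₇(P,γ₁,γ₂) ⪯ 0` holds iff the 3×3 block LMI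
`L₁₃(X,γ₁,γ₂) ⪯ 0` holds. -/
theorem stmt_11 {n m p : ℕ} (hn : 0 < n) (hm : 0 < m) (hp : 0 < p)
    (A U : Matrix (Fin n) (Fin n) ℝ) (B : Matrix (Fin n) (Fin m) ℝ)
    (Cp : Matrix (Fin p) (Fin n) ℝ)
    (P : Matrix (Fin n) (Fin n) ℝ) (hPsym : P.IsSymm) (hP : P.PosDef)
    (X : Matrix (Fin n) (Fin n) ℝ) (hX : X = P⁻¹)
    (γ₁ γ₂ : ℝ) (hγ₁ : 0 ≤ γ₁) (hγ₂ : 0 ≤ γ₂) :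
    (-(Matrix.fromBlocks
        (Aᵀ * P + P * A + Cpᵀ * Cp - γ₁ • (Uᵀ * U)) (P * B)
        (Bᵀ * P) (-(γ₂ • (1 : Matrix (Fin m) (Fin m) ℝ))))).PosSemidef ↔
    (-(Matrix.fromBlocks
        (Matrix.fromBlocks (-1) (Cp * X) (X * Cpᵀ)
          (X * Aᵀ + A * X - γ₁ • (X * Uᵀ * U * X)))
        (Matrix.fromRows 0 B)
        (Matrix.fromCols 0 Bᵀ)
        (-(γ₂ • (1 : Matrix (Fin m) (Fin m) ℝ))))).PosSemidef :=
  stmt_11_general A U B Cp P hP X hX γ₁ γ₂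
end

section
/- Let n be a positive integer, z : Fin n → ℝ a nonzero vector, and Z a real n×n positive semidefinite matrix with rank Z ≤ 1 such that Z − z zᵀ is positive semidefinite (where z zᵀ denotes the rank-one matrix Matrix.vecMulVec z z). Then there exists a real scalar λ ≥ 1 such that Z = λ • (z zᵀ). (This is the linear-algebraic fact underlying the rank-one analysis of the SDP relaxation of the binary allocation constraint: a rank-one PSD matrix dominating z zᵀ in the Loewner order must be a scalar multiple of z zᵀ with scalar at least 1.) -/
open Matrix

/-- A PSD matrix of rank at most one that dominates the rank-one matrix `z zᵀ` (with
`z ≠ 0`) in the Loewner order must equal `λ • z zᵀ` for some scalar `λ ≥ 1`. -/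
theorem stmt_12 {n : ℕ} (hn : 0 < n) (z : Fin n → ℝ) (hz : z ≠ 0)
    (Z : Matrix (Fin n) (Fin n) ℝ) (hZ : Z.PosSemidef) (hrank : Z.rank ≤ 1)
    (hdom : (Z - Matrix.vecMulVec z z).PosSemidef) :
    ∃ lam : ℝ, 1 ≤ lam ∧ Z = lam • Matrix.vecMulVec z z := by
  classical
  have hsymm : ∀ i j, Z i j = Z j i := fun i j => by
    have := hZ.1.apply i j; simpa using this.symm
  -- column structure from rank ≤ 1
  obtain ⟨g0, hg0⟩ := finrank_le_one_iff.mp (hrank : Module.finrank ℝ (LinearMap.range Z.mulVecLin) ≤ 1)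
  have hcol : ∀ j, ∃ c : ℝ, ∀ i, Z i j = c * (g0 : Fin n → ℝ) i := by
    intro j
    obtain ⟨c, hc⟩ := hg0 ⟨Z *ᵥ Pi.single j 1, ⟨Pi.single j 1, rfl⟩⟩
    refine ⟨c, fun i => ?_⟩
    have h1 := congrFun (congrArg Subtype.val hc) i
    simpa using h1.symm
  choose a ha using hcol
  have key : ∀ i j k l, Z i j * Z k l = Z i l * Z k j := fun i j k l => by
    rw [ha j i, ha l k, ha l i, ha j k]; ring
  set w : Fin n → ℝ := Z *ᵥ z with hw
  set q : ℝ := z ⬝ᵥ w with hq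
  have hzz : 0 < z ⬝ᵥ z :=
    lt_of_le_of_ne (Finset.sum_nonneg fun i _ => mul_self_nonneg _)
      (fun h => hz (dotProduct_self_eq_zero.mp h.symm))
  have hvmv : ∀ v : Fin n → ℝ, (vecMulVec z z) *ᵥ v = (z ⬝ᵥ v) • z := by
    intro v; ext i
    simp [vecMulVec, mulVec, dotProduct, Finset.mul_sum, Finset.sum_mul, mul_comm, mul_left_comm]
  have hq1 : (z ⬝ᵥ z) ^ 2 ≤ q := by
    have h0 := hdom.dotProduct_mulVec_nonneg z
    rw [sub_mulVec, dotProduct_sub, hvmv, dotProduct_smul] at h0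
    simp only [star_trivial, smul_eq_mul] at h0
    nlinarith [h0]
  have hqpos : 0 < q := lt_of_lt_of_le (by positivity) hq1
  have hZw : ∀ i j, Z i j * q = w i * w j := by
    intro i j
    have e1 : Z i j * q = ∑ k, ∑ l, Z i j * (z k * (Z k l * z l)) := by
      rw [hq, hw]
      simp only [mulVec, dotProduct, Finset.mul_sum]
    have e2 : w i * w j = ∑ k, ∑ l, Z i l * z l * (Z j k * z k) := by
      rw [hw]
      simp only [mulVec, dotProduct, Finset.sum_mul, Finset.mul_sum]
    rw [e1, e2]
    apply Finset.sum_congr rfl; intro k _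
    apply Finset.sum_congr rfl; intro l _
    linear_combination z k * z l * key i j k l + z k * z l * Z i l * hsymm k j
  have hwzq : w ⬝ᵥ z = q := by rw [hq, dotProduct_comm]
  have hww : 0 < w ⬝ᵥ w := by
    rcases eq_or_ne w 0 with h | h
    · exfalso; rw [hq, h, dotProduct_zero] at hqpos; exact lt_irrefl _ hqpos
    · exact lt_of_le_of_ne (Finset.sum_nonneg fun i _ => mul_self_nonneg _)
        (fun h' => h (dotProduct_self_eq_zero.mp h'.symm))
  set v : Fin n → ℝ := (w ⬝ᵥ w) • z - q • w with hv
  have hwv : w ⬝ᵥ v = 0 := by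
    rw [hv, dotProduct_sub, dotProduct_smul, dotProduct_smul, hwzq]
    simp [mul_comm]
  have hvZv : v ⬝ᵥ Z *ᵥ v = 0 := by
    have h1 : (v ⬝ᵥ Z *ᵥ v) * q = (w ⬝ᵥ v) * (w ⬝ᵥ v) := by
      simp only [mulVec, dotProduct, Finset.sum_mul, Finset.mul_sum]
      apply Finset.sum_congr rfl; intro i _
      apply Finset.sum_congr rfl; intro j _
      linear_combination v i * v j * hZw i j
    rw [hwv, mul_zero] at h1
    exact (mul_eq_zero.mp h1).resolve_right (ne_of_gt hqpos)
  have hzv : z ⬝ᵥ v = 0 := by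
    have h0 := hdom.dotProduct_mulVec_nonneg v
    rw [sub_mulVec, dotProduct_sub, hvmv, dotProduct_smul] at h0
    simp only [star_trivial, smul_eq_mul, hvZv] at h0
    rw [dotProduct_comm v z] at h0
    have h2 : (z ⬝ᵥ v) * (z ⬝ᵥ v) ≤ 0 := by nlinarith [h0]
    exact mul_self_eq_zero.mp (le_antisymm h2 (mul_self_nonneg _))
  have hvz : v ⬝ᵥ z = 0 := by rw [dotProduct_comm]; exact hzv
  have hvw : v ⬝ᵥ w = 0 := by rw [dotProduct_comm]; exact hwv
  have hveq : v = 0 := by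
    have hvv : v ⬝ᵥ v = 0 := by
      nth_rewrite 2 [hv]
      rw [dotProduct_sub, dotProduct_smul, dotProduct_smul, hvz, hvw]
      simp
    exact dotProduct_self_eq_zero.mp hvv
  have hB : ∀ i, (w ⬝ᵥ w) * z i = q * w i := by
    intro i
    have := congrFun hveq i
    simp only [hv, Pi.sub_apply, Pi.smul_apply, smul_eq_mul, Pi.zero_apply] at this
    linarith
  have hD : (w ⬝ᵥ w) * (z ⬝ᵥ z) = q ^ 2 := by
    rw [hv] at hzv
    rw [dotProduct_sub, dotProduct_smul, dotProduct_smul] at hzv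
    simp only [smul_eq_mul, hq] at hzv ⊢
    nlinarith [hzv]
  refine ⟨q / (z ⬝ᵥ z) ^ 2, ?_, ?_⟩
  · rw [le_div_iff₀ (by positivity : (0:ℝ) < (z ⬝ᵥ z) ^ 2)]
    nlinarith [hq1]
  · ext i j
    have hA := hZw i j
    have hBi := hB i
    have hBj := hB j
    have hww2 : (w ⬝ᵥ w) ^ 2 ≠ 0 := by positivity
    have hmain : (w ⬝ᵥ w) ^ 2 * (Z i j * (z ⬝ᵥ z) ^ 2) = (w ⬝ᵥ w) ^ 2 * (q * (z i * z j)) := by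
      linear_combination (Z i j * ((w ⬝ᵥ w) * (z ⬝ᵥ z) + q ^ 2)) * hD + q ^ 3 * hA
        - q * (w ⬝ᵥ w) * (z j) * hBi - q ^ 2 * (w i) * hBj
    have hZij : Z i j * (z ⬝ᵥ z) ^ 2 = q * (z i * z j) := mul_left_cancel₀ hww2 hmain
    simp only [Matrix.smul_apply, vecMulVec_apply, smul_eq_mul]
    field_simp
    linarith [hZij]
end

section
/- Let n be a positive integer, z : Fin n → ℝ, and Z a real n×n matrix. Suppose (i) the (n+1)×(n+1) block matrix [[Z, z], [zᵀ, 1]] (formed with Matrix.fromBlocks from Z, the column vector z, the row vector zᵀ, and the 1×1 block with entry 1) is positive semidefinite, (ii) the diagonal of Z equals z (Matrix.diag Z = z), and (iii) rank Z = 1. Then there exists a real scalar λ ≥ 1 such that for every index i, either z i = 0 or λ * z i = 1. In particular, all nonzero entries of z are equal to the common value 1/λ ∈ (0, 1]. -/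
open Matrix

/-!
By the Schur complement, `M = Z - z zᵀ` is positive semidefinite. Its diagonal `z i - z i ^ 2`
is nonnegative, so `0 ≤ z i ≤ 1`. Since `Z` has rank one, its `2 × 2` minors vanish:
`Z i j ^ 2 = z i * z j`. For two nonzero entries `a = z i`, `b = z j` and `c = Z i j`, the
`2 × 2` principal minor of `M` gives `(c - a b) ^ 2 ≤ (a - a ^ 2) (b - b ^ 2)`, i.e.
`a + b ≤ 2 c`; with `c ^ 2 = a b` this is the equality case of AM-GM, so `a = b`.
-/

theorem Matrix.mul_eq_mul_of_rank_le_one {m n K : Type*} [Fintype n] [Field K]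
    {A : Matrix m n K} (hA : A.rank ≤ 1) (i j : m) (k l : n) :
    A i k * A j l = A i l * A j k := by
  set S := A.submatrix ![i, j] ![k, l]
  have hS : S.rank ≤ 1 := (A.rank_submatrix_le _ _).trans hA
  have hdet : S.det = 0 := by
    by_contra h
    have := S.rank_of_isUnit ((S.isUnit_iff_isUnit_det).mpr (Ne.isUnit h))
    simp only [Fintype.card_fin] at this
    omega
  rw [det_fin_two, sub_eq_zero] at hdet
  simpa only [S, submatrix_apply, cons_val_zero, cons_val_one] using hdet

theorem Matrix.PosSemidef.apply_sq_le {n : Type*} [Fintype n] {M : Matrix n n ℝ}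
    (hM : M.PosSemidef) (i j : n) : M i j ^ 2 ≤ M i i * M j j := by
  have hdet := (hM.submatrix ![i, j]).det_nonneg
  have hsymm : M j i = M i j := hM.isHermitian.apply i j
  rw [det_fin_two] at hdet
  simp only [submatrix_apply, Matrix.cons_val_zero, Matrix.cons_val_one, hsymm] at hdet
  nlinarith

theorem Matrix.PosSemidef.sub_vecMulVec_of_fromBlocks {n : Type*} [Fintype n] [DecidableEq n]
    {Z : Matrix n n ℝ} {z : n → ℝ}
    (h : (fromBlocks Z (replicateCol (Fin 1) z) (replicateRow (Fin 1) z) 1).PosSemidef) :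
    (Z - vecMulVec z z).PosSemidef := by
  have hrow : replicateRow (Fin 1) z = (replicateCol (Fin 1) z)ᴴ := by
    rw [conjTranspose_replicateCol, star_trivial]
  rw [hrow] at h
  let : Invertible (1 : Matrix (Fin 1) (Fin 1) ℝ) := invertibleOne
  have := (PosDef.fromBlocks₂₂ Z _ PosDef.one).mp h
  rw [inv_one, Matrix.mul_one, ← hrow] at this
  rwa [vecMulVec_eq (Fin 1)]

theorem eq_of_sq_eq_mul_of_sq_sub_mul_le {a b c : ℝ} (ha : 0 < a) (hb : 0 < b)
    (hc : c ^ 2 = a * b) (h : (c - a * b) ^ 2 ≤ (a - a ^ 2) * (b - b ^ 2)) : a = b := by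
  have hsum : a + b ≤ 2 * c := by nlinarith [mul_pos ha hb]
  nlinarith [sq_nonneg (a - b), sq_nonneg (a + b)]

theorem exists_one_le_forall_eq_zero_or_mul_eq_one {ι : Type*} {z : ι → ℝ}
    (hz : ∀ i, 0 ≤ z i ∧ z i ≤ 1) (heq : ∀ i j, z i ≠ 0 → z j ≠ 0 → z i = z j) :
    ∃ lam : ℝ, 1 ≤ lam ∧ ∀ i, z i = 0 ∨ lam * z i = 1 := by
  by_cases hzero : ∀ i, z i = 0
  · exact ⟨1, le_rfl, fun i => .inl (hzero i)⟩
  obtain ⟨i₀, hi₀⟩ := not_forall.mp hzero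
  have hpos : 0 < z i₀ := (hz i₀).1.lt_of_ne' hi₀
  refine ⟨(z i₀)⁻¹, (one_le_inv₀ hpos).mpr (hz i₀).2, fun i => or_iff_not_imp_left.mpr ?_⟩
  intro hi
  rw [heq i i₀ hi hi₀, inv_mul_cancel₀ hi₀]

theorem stmt_13_general {n : ℕ} (z : Fin n → ℝ) (Z : Matrix (Fin n) (Fin n) ℝ)
    (hpsd : (Matrix.fromBlocks Z (Matrix.replicateCol (Fin 1) z) (Matrix.replicateRow (Fin 1) z)
      (1 : Matrix (Fin 1) (Fin 1) ℝ)).PosSemidef)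
    (hdiag : Matrix.diag Z = z)
    (hrank : Z.rank = 1) :
    ∃ lam : ℝ, 1 ≤ lam ∧ ∀ i, z i = 0 ∨ lam * z i = 1 := by
  have hM := hpsd.sub_vecMulVec_of_fromBlocks
  have hZii (i) : Z i i = z i := congrFun hdiag i
  have hMij (i j) : (Z - vecMulVec z z) i j = Z i j - z i * z j := rfl
  have hz (i) : 0 ≤ z i ∧ z i ≤ 1 := by
    have := hM.diag_nonneg (i := i)
    rw [hMij, hZii] at this
    constructor <;> nlinarith
  refine exists_one_le_forall_eq_zero_or_mul_eq_one hz fun i j hi hj => ?_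
  have hZsymm : Z j i = Z i j := (hpsd.submatrix Sum.inl : Z.PosSemidef).isHermitian.apply i j
  have hminor : Z i j ^ 2 = z i * z j := by
    rw [sq, ← hZii, ← hZii]
    nth_rewrite 2 [← hZsymm]
    exact (Z.mul_eq_mul_of_rank_le_one hrank.le i j i j).symm
  have hbound := hM.apply_sq_le i j
  rw [hMij, hMij, hMij, hZii, hZii] at hbound
  exact eq_of_sq_eq_mul_of_sq_sub_mul_le ((hz i).1.lt_of_ne' hi) ((hz j).1.lt_of_ne' hj) hminor
    (by linarith)

/-- Rank-one analysis of the SDP relaxation of the binary allocation constraint: if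
`[[Z, z], [zᵀ, 1]] ⪰ 0`, `diag Z = z` and `rank Z = 1`, then there is a scalar `λ ≥ 1`
such that every entry of `z` is either `0` or `1/λ`. -/
theorem stmt_13 {n : ℕ} (hn : 0 < n) (z : Fin n → ℝ) (Z : Matrix (Fin n) (Fin n) ℝ)
    (hpsd : (Matrix.fromBlocks Z (Matrix.replicateCol (Fin 1) z) (Matrix.replicateRow (Fin 1) z)
      (1 : Matrix (Fin 1) (Fin 1) ℝ)).PosSemidef)
    (hdiag : Matrix.diag Z = z)
    (hrank : Z.rank = 1) :
    ∃ lam : ℝ, 1 ≤ lam ∧ ∀ i, z i = 0 ∨ lam * z i = 1 :=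
  stmt_13_general z Z hpsd hdiag hrank
end
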